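/- Let p be a prime with p ≡ 3 (mod 8), and write p = a² + 2b² with a, b positive integers. Let α = a + b√(-2) ∈ ℤ[ζ₈]. Then for all integers k, n, the squared canonical length of α·ζ₈^k·(1+√2)^n equals 2p((1+√2)^{2n} + (1+√2)^{-2n}) ≥ 4p, with equality iff n = 0. Hence the shortest generator of (α) has canonical length √(4p). -/

import Mathlib

open Complex

/-- A primitive 8th root of unity in `ℂ`. -/
noncomputable def ζ₈ : ℂ := Complex.exp (2 * Real.pi * Complex.I / 8)

private lemma aux_amgm (x : ℝ) (hx : 0 < x) : 2 ≤ x + x⁻¹ := by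
  nlinarith [sq_nonneg (x - 1), hx, mul_inv_cancel₀ hx.ne']

private lemma aux_eq_one (x : ℝ) (hx : 0 < x) (h : x + x⁻¹ = 2) : x = 1 := by
  have hz : (x - 1) ^ 2 = 0 := by nlinarith [mul_inv_cancel₀ hx.ne']
  have := pow_eq_zero_iff (n := 2) (by norm_num) |>.mp hz
  linarith

theorem shortest_generator_p3mod8
    (p : ℕ) (hp : p.Prime) (hp3 : p % 8 = 3)
    (a b : ℤ) (ha : 0 < a) (hb : 0 < b) (hab : a ^ 2 + 2 * b ^ 2 = (p : ℤ)) :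
    ∀ k n : ℤ,
      (2 * ‖(((a : ℂ) + b * (Complex.I * Real.sqrt 2)) * ζ₈ ^ k *
            (((1 + Real.sqrt 2) ^ n : ℝ) : ℂ))‖ ^ 2
          + 2 * ‖(((a : ℂ) + b * (Complex.I * Real.sqrt 2)) * ζ₈ ^ (3 * k) *
            (((1 - Real.sqrt 2) ^ n : ℝ) : ℂ))‖ ^ 2
        = 2 * p * ((1 + Real.sqrt 2) ^ (2 * n) + (1 + Real.sqrt 2) ^ (-(2 * n)))) ∧
      (4 * (p : ℝ) ≤ 2 * p * ((1 + Real.sqrt 2) ^ (2 * n) + (1 + Real.sqrt 2) ^ (-(2 * n)))) ∧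
      (2 * (p : ℝ) * ((1 + Real.sqrt 2) ^ (2 * n) + (1 + Real.sqrt 2) ^ (-(2 * n))) = 4 * p
        ↔ n = 0) := by
  intro k n
  have hs2 : Real.sqrt 2 ^ 2 = 2 := Real.sq_sqrt (by norm_num)
  have hs1 : 1 < Real.sqrt 2 := by nlinarith [Real.sqrt_nonneg 2]
  set s : ℝ := Real.sqrt 2 with hs
  have ht : (0:ℝ) < 1 + s := by linarith
  have ht1 : (1:ℝ) < 1 + s := by linarith
  have hpR : (0:ℝ) < (p:ℝ) := by exact_mod_cast hp.pos
  -- abs of α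
  have habsα : ‖(a : ℂ) + b * (Complex.I * s)‖ ^ 2 = (p : ℝ) := by
    rw [Complex.sq_norm, Complex.normSq_apply]
    simp only [Complex.add_re, Complex.add_im, Complex.mul_re, Complex.mul_im,
      Complex.I_re, Complex.I_im, Complex.intCast_re, Complex.intCast_im,
      Complex.ofReal_re, Complex.ofReal_im]
    have h : (a:ℝ)^2 + 2*(b:ℝ)^2 = (p:ℝ) := by exact_mod_cast hab
    ring_nf
    nlinarith [h]
  -- abs of ζ₈ powers
  have hζ : ‖ζ₈‖ = 1 := by
    rw [ζ₈, Complex.norm_exp]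
    have h : (2 * (Real.pi:ℂ) * Complex.I / 8).re = 0 := by
      simp [Complex.div_re]
    rw [h, Real.exp_zero]
  have hζk : ∀ m : ℤ, ‖ζ₈ ^ m‖ = 1 := by
    intro m
    rw [norm_zpow, hζ, one_zpow]
  -- (1-s) relates to inverse
  have hinv : (1 - s) * (1 + s) = -1 := by nlinarith
  have hx : (0:ℝ) < (1 + s) ^ (2*n) := zpow_pos ht _
  have key : |(1 - s)| = (1 + s)⁻¹ := by
    rw [abs_of_nonpos (by nlinarith)]
    field_simp
    nlinarith
  have hA1 : |(1 + s) ^ n| = |1 + s| ^ n := map_zpow₀ (absHom : ℝ →*₀ ℝ) _ n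
  have hA2 : |(1 - s) ^ n| = |1 - s| ^ n := map_zpow₀ (absHom : ℝ →*₀ ℝ) _ n
  have hneg : (1 + s) ^ (-(2 * n)) = ((1 + s) ^ (2 * n))⁻¹ := zpow_neg _ _
  -- first clause
  have h1 : 2 * ‖((a : ℂ) + b * (Complex.I * s)) * ζ₈ ^ k *
            (((1 + s) ^ n : ℝ) : ℂ)‖ ^ 2
      + 2 * ‖((a : ℂ) + b * (Complex.I * s)) * ζ₈ ^ (3 * k) *
            (((1 - s) ^ n : ℝ) : ℂ)‖ ^ 2
      = 2 * p * ((1 + s) ^ (2 * n) + (1 + s) ^ (-(2 * n))) := by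
    rw [norm_mul, norm_mul, norm_mul, norm_mul, hζk, hζk,
      Complex.norm_real, Complex.norm_real, Real.norm_eq_abs, Real.norm_eq_abs]
    rw [hA1, hA2, abs_of_pos ht, key]
    rw [mul_pow, mul_pow, mul_pow, mul_pow, habsα, one_pow]
    have e1 : (((1+s):ℝ) ^ n) ^ (2:ℕ) = (1+s) ^ (2*n) := by
      rw [← zpow_natCast (((1+s):ℝ) ^ n) 2, ← zpow_mul]
      congr 1
      push_cast
      ring
    have e2 : ((((1+s):ℝ)⁻¹ ^ n)) ^ (2:ℕ) = (1+s) ^ (-(2*n)) := by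
      rw [inv_zpow, ← zpow_neg, ← zpow_natCast (((1+s):ℝ) ^ (-n)) 2, ← zpow_mul]
      congr 1
      push_cast
      ring
    rw [e1, e2]
    ring
  refine ⟨h1, ?_, ?_⟩
  · have hsum : (2:ℝ) ≤ (1 + s) ^ (2*n) + (1 + s) ^ (-(2*n)) := by
      rw [hneg]; exact aux_amgm _ hx
    have h2 := mul_le_mul_of_nonneg_left hsum (by positivity : (0:ℝ) ≤ 2 * p)
    linarith
  · constructor
    · intro h
      have hsum : (1 + s) ^ (2*n) + ((1 + s) ^ (2*n))⁻¹ = 2 := by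
        rw [hneg] at h
        have h2 : 2 * (p:ℝ) * ((1 + s) ^ (2*n) + ((1 + s) ^ (2*n))⁻¹) = 2 * (p:ℝ) * 2 := by
          linarith
        exact mul_left_cancel₀ (by positivity) h2
      have hone : (1 + s) ^ (2*n) = 1 := aux_eq_one _ hx hsum
      have h2n : 2 * n = 0 := by
        by_contra hne
        rcases lt_or_gt_of_ne hne with hlt | hgt
        · have hc : (1 + s) ^ (2*n) < (1 + s) ^ (0:ℤ) := zpow_lt_zpow_right₀ ht1 hlt
          simp [hone] at hc
        · have hc : (1 + s) ^ (0:ℤ) < (1 + s) ^ (2*n) := zpow_lt_zpow_right₀ ht1 hgt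
          simp [hone] at hc
      omega
    · rintro rfl
      norm_num
      ring
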